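/- arXiv:1612.06563 — 2 statements merged into one kernel-verified Lean document; each statement's English description precedes it below -/
import Mathlib

section
/- For any integers m, i with 1 ≤ i ≤ m+1, the polynomial f_{m,i}(t) has degree exactly m+1−i, and its leading coefficient c_{m,i} satisfies (−1)^m·c_{m,i} > 0. -/
/-!
The `t · f'` term of the recursion cannot reach degree `m + 1 - i`, so the coefficient of
`t^(m+1-i)` in `f_{m,i}` is `-i c_{m-1,i} - (i-1) c_{m-1,i-1}` for `i ≤ m` (with the second term
absent when `i = 1`) and `-m c_{m-1,m}` for `i = m + 1`. Inductively both contributions have sign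
`(-1)^(m-1)`, so this coefficient is nonzero with sign `(-1)^m`, and it is the leading one.
-/

open Polynomial PowerSeries

/-- The polynomials `f_{m,i}(t)` defined recursively. -/
noncomputable def fmi : ℕ → ℕ → Polynomial ℚ
  | 0, 0 => Polynomial.C (1/2) * Polynomial.X - 1
  | 0, 1 => 1
  | 0, _ + 2 => 0
  | m + 1, 0 => Polynomial.X * Polynomial.derivative (fmi m 0)
  | m + 1, i + 1 =>
    if i = m + 1 then -((m : ℚ) + 1) • fmi m (m + 1)
    else if i + 1 ≤ m + 1 then
      Polynomial.X * Polynomial.derivative (fmi m (i + 1))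
        + Polynomial.C ((i : ℚ) + 1) * (1 - Polynomial.X) * fmi m (i + 1)
        - Polynomial.C (i : ℚ) * fmi m i
    else 0

namespace Polynomial

variable {R : Type*} [CommRing R]

/-- With `a = i`, `b = i - 1`, `p = f_{m-1,i}`, `q = f_{m-1,i-1}` this is `f_{m,i}` for `1 ≤ i ≤ m`. -/
noncomputable def fmiStep (a b : R) (p q : R[X]) : R[X] :=
  X * derivative p + C a * (1 - X) * p - C b * q

theorem natDegree_fmiStep_le {a b : R} {p q : R[X]} {d : ℕ} (hp : p.natDegree ≤ d)
    (hq : (C b * q).natDegree ≤ d + 1) : (fmiStep a b p q).natDegree ≤ d + 1 := by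
  refine (natDegree_sub_le_iff_left hq).mpr (natDegree_add_le_of_degree_le ?_ ?_)
  · have := natDegree_derivative_le p
    exact natDegree_mul_le_of_le natDegree_X_le le_rfl |>.trans (by omega)
  · have hlin : (C a * (1 - X)).natDegree ≤ 1 := by compute_degree
    exact natDegree_mul_le_of_le hlin hp |>.trans (by omega)

theorem coeff_fmiStep_succ {a b : R} {p q : R[X]} {d : ℕ} (hp : p.natDegree ≤ d) :
    (fmiStep a b p q).coeff (d + 1) = -a * p.coeff d - b * q.coeff (d + 1) := by
  have htop : p.coeff (d + 1) = 0 := coeff_eq_zero_of_natDegree_lt (by omega)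
  simp [fmiStep, mul_sub, sub_mul, mul_assoc, coeff_derivative, htop]

end Polynomial

theorem fmi_succ_succ_self (m : ℕ) : fmi (m + 1) (m + 2) = -((m : ℚ) + 1) • fmi m (m + 1) := by
  rw [fmi, if_pos rfl]

theorem fmi_succ_succ_of_le {m j : ℕ} (h : j ≤ m) :
    fmi (m + 1) (j + 1) = fmiStep ((j : ℚ) + 1) j (fmi m (j + 1)) (fmi m j) := by
  rw [fmi, if_neg (by omega), if_pos (by omega), fmiStep]

theorem fmi_natDegree_le_and_coeff_pos (m i : ℕ) (h1 : 1 ≤ i) (h2 : i ≤ m + 1) :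
    (fmi m i).natDegree ≤ m + 1 - i ∧ 0 < (-1 : ℚ) ^ m * (fmi m i).coeff (m + 1 - i) := by
  induction m generalizing i with
  | zero =>
    obtain rfl : i = 1 := by omega
    simp [fmi]
  | succ m ih =>
    obtain ⟨j, rfl⟩ : ∃ j, i = j + 1 := ⟨i - 1, by omega⟩
    by_cases hj : j = m + 1
    · subst hj
      obtain ⟨hdeg, hpos⟩ := ih (m + 1) (by omega) le_rfl
      simp only [Nat.sub_self] at hdeg hpos ⊢
      rw [fmi_succ_succ_self]
      refine ⟨(natDegree_smul_le _ _).trans hdeg, ?_⟩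
      rw [Polynomial.coeff_smul, smul_eq_mul, pow_succ]
      have := mul_pos (by positivity : (0 : ℚ) < m + 1) hpos
      linarith
    · obtain ⟨hpdeg, hppos⟩ := ih (j + 1) (by omega) (by omega)
      rw [show m + 1 - (j + 1) = m - j by omega] at hpdeg hppos
      have hq : (Polynomial.C (j : ℚ) * fmi m j).natDegree ≤ m - j + 1 ∧
          0 ≤ (-1 : ℚ) ^ m * (j * (fmi m j).coeff (m - j + 1)) := by
        rcases Nat.eq_zero_or_pos j with rfl | hj0
        · simp
        · obtain ⟨hqdeg, hqpos⟩ := ih j hj0 (by omega)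
          rw [show m + 1 - j = m - j + 1 by omega] at hqdeg hqpos
          refine ⟨(natDegree_C_mul_le _ _).trans hqdeg, ?_⟩
          rw [mul_left_comm]
          exact mul_nonneg j.cast_nonneg hqpos.le
      rw [show m + 1 + 1 - (j + 1) = m - j + 1 by omega, fmi_succ_succ_of_le (by omega)]
      refine ⟨natDegree_fmiStep_le hpdeg hq.1, ?_⟩
      rw [coeff_fmiStep_succ hpdeg, pow_succ]
      have := mul_pos (by positivity : (0 : ℚ) < j + 1) hppos
      linarith [hq.2]

theorem fmi_degree_leadingCoeff (m i : ℕ) (h1 : 1 ≤ i) (h2 : i ≤ m + 1) :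
    (fmi m i).degree = (m + 1 - i : ℕ) ∧
    (-1 : ℚ) ^ m * (fmi m i).leadingCoeff > 0 := by
  obtain ⟨hdeg, hpos⟩ := fmi_natDegree_le_and_coeff_pos m i h1 h2
  have hne : (fmi m i).coeff (m + 1 - i) ≠ 0 := by
    rintro h
    simp [h] at hpos
  refine ⟨degree_eq_of_le_of_coeff_ne_zero (degree_le_of_natDegree_le hdeg) hne, ?_⟩
  rwa [leadingCoeff, natDegree_eq_of_le_of_coeff_ne_zero hdeg hne]
end

section
/- For every nonnegative integer m, one has the polynomial identity ∑_{i=1}^{m+1} (−1)^{i−1}·f_{m,i}(t)·t^{i−1} = 1 in ℚ[t]. -/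
open Polynomial PowerSeries

/-!
Write `T_m = ∑_{i ≥ 1} (-1)^(i-1) f_{m,i} t^(i-1)`. Multiplying the recurrence for `f_{m+1,i}` by
`(-1)^(i-1) t^(i-1)` turns it into `t d/dt + 1` applied to the `i`-th term of `T_m`, plus
`b_i - b_(i-1)` with `b_i = (-1)^i i f_{m,i} t^i`. The differences telescope to zero, so
`T_{m+1} = t T_m' + T_m`, and since `T_0 = f_{0,1} = 1`, every `T_m` equals `1`.
-/

namespace Polynomial

theorem X_mul_derivative_mul_X_pow {R : Type*} [CommSemiring R] (p : R[X]) (j : ℕ) :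
    X * derivative (p * X ^ j) = (X * derivative p + C (j : R) * p) * X ^ j := by
  cases j with
  | zero => simp
  | succ j =>
    rw [derivative_mul, derivative_X_pow]
    push_cast
    ring

end Polynomial

theorem fmi_eq_zero_of_lt {m i : ℕ} (h : m + 1 < i) : fmi m i = 0 := by
  cases m with
  | zero =>
    obtain ⟨k, rfl⟩ := Nat.exists_eq_add_of_le' h
    rfl
  | succ m =>
    obtain ⟨i, rfl⟩ := Nat.exists_eq_add_of_le' (Nat.zero_lt_of_lt h)
    rw [fmi, if_neg (by omega), if_neg (by omega)]

/-- The top case `i = m + 1` fits the general recurrence because `f_{m,m+2} = 0`. -/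
theorem fmi_succ_succ (m i : ℕ) :
    fmi (m + 1) (i + 1) = Polynomial.X * Polynomial.derivative (fmi m (i + 1))
      + Polynomial.C ((i : ℚ) + 1) * (1 - Polynomial.X) * fmi m (i + 1)
      - Polynomial.C (i : ℚ) * fmi m i := by
  rw [fmi]
  split_ifs with htop
  · subst htop
    rw [fmi_eq_zero_of_lt (i := m + 1 + 1) (by omega), Polynomial.derivative_zero,
      Polynomial.smul_eq_C_mul]
    simp only [map_neg, map_add, map_one, map_natCast, Nat.cast_add, Nat.cast_one]
    ring
  · rfl
  · rw [fmi_eq_zero_of_lt (i := i + 1) (by omega), fmi_eq_zero_of_lt (i := i) (by omega)]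
    simp

noncomputable def fmiTerm (m j : ℕ) : ℚ[X] := (-1 : ℚ) ^ j • (fmi m (j + 1) * Polynomial.X ^ j)

theorem fmiTerm_succ (m j : ℕ) :
    fmiTerm (m + 1) j = Polynomial.X * Polynomial.derivative (fmiTerm m j) + fmiTerm m j
      + (((-1 : ℚ) ^ (j + 1) * (j + 1 : ℕ)) • (fmi m (j + 1) * Polynomial.X ^ (j + 1))
        - ((-1 : ℚ) ^ j * j) • (fmi m j * Polynomial.X ^ j)) := by
  simp only [fmiTerm]
  rw [Polynomial.derivative_smul, mul_smul_comm, Polynomial.X_mul_derivative_mul_X_pow,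
    fmi_succ_succ]
  simp only [Polynomial.smul_eq_C_mul, map_mul, map_pow, map_neg, map_one, map_add, map_natCast, Nat.cast_add, Nat.cast_one]
  ring

noncomputable def fmiSum (m : ℕ) : ℚ[X] := ∑ j ∈ Finset.range (m + 1), fmiTerm m j

theorem fmiSum_succ (m : ℕ) :
    fmiSum (m + 1) = Polynomial.X * Polynomial.derivative (fmiSum m) + fmiSum m := by
  have htop : fmiTerm m (m + 1) = 0 := by
    rw [fmiTerm, fmi_eq_zero_of_lt (by omega), zero_mul, smul_zero]
  simp only [fmiSum, fmiTerm_succ, Finset.sum_add_distrib, Finset.sum_range_sub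
    (fun j => ((-1 : ℚ) ^ j * j) • (fmi m j * Polynomial.X ^ j))]
  rw [fmi_eq_zero_of_lt (i := m + 1 + 1) (by omega), Finset.sum_range_succ _ (m + 1),
    Finset.sum_range_succ _ (m + 1), htop, Polynomial.derivative_sum, Finset.mul_sum]
  simp

theorem fmiSum_eq_one (m : ℕ) : fmiSum m = 1 := by
  induction m with
  | zero => simp [fmiSum, fmiTerm, fmi]
  | succ m ih => simp [fmiSum_succ, ih]

theorem sum_fmi_eq_one (m : ℕ) :
    ∑ i ∈ Finset.Icc 1 (m + 1),
      ((-1 : ℚ) ^ (i - 1)) • (fmi m i * Polynomial.X ^ (i - 1)) = 1 := by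
  rw [← fmiSum_eq_one m, fmiSum, ← Finset.Ico_add_one_right_eq_Icc, Finset.sum_Ico_eq_sum_range]
  refine Finset.sum_congr rfl fun j _ => ?_
  rw [fmiTerm, add_tsub_cancel_left, add_comm]
end
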